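/- Let m ≥ 2 be an even integer, let q be a prime power, and for each j with 2 ≤ j ≤ m let f_j : F_{q²}^{2j−2} → F_{q²} satisfy (i) point-line-symmetry: f_j(x₁, y₁, x₂, y₂, ..., x_{j−1}, y_{j−1}) = f_j(y₁, x₁, y₂, x₂, ..., y_{j−1}, x_{j−1}) for all arguments, and (ii) equivariance with the q-power Frobenius: f_j(x₁^q, y₁^q, ..., x_{j−1}^q, y_{j−1}^q) = f_j(x₁, y₁, ..., x_{j−1}, y_{j−1})^q for all arguments. Let Γ_{q²}^π be the simple graph with vertex set F_{q²}^m in which two distinct vertices (p₁,...,p_m) and (r₁,...,r_m) are adjacent if and only if p_j + r_j^q = f_j(r₁^q, p₁, r₂^q, p₂, ..., r_{j−1}^q, p_{j−1}) for all 2 ≤ j ≤ m (this relation is symmetric under the stated hypotheses). Then there is a partition of F_{q²}^m into q^{m+1} independent sets of Γ_{q²}^π such that for any two distinct parts there is exactly one edge with one endpoint in each part; consequently e(Γ_{q²}^π) = C(q^{m+1}, 2) and χ_a(Γ_{q²}^π) = q^{m+1}, i.e., Γ_{q²}^π is optimally complete. -/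
import Mathlib


/-- A complete partition of a graph `G` into `r` parts, encoded as a coloring
`c : V → Fin r` such that between any two distinct color classes there is an edge. -/
def IsCompletePartition {V : Type*} (G : SimpleGraph V) {r : ℕ} (c : V → Fin r) : Prop :=
  ∀ i j : Fin r, i ≠ j → ∃ u v : V, c u = i ∧ c v = j ∧ G.Adj u v

/-- The achromatic number: the largest `r` such that `G` admits a complete
partition into `r` independent parts. -/
noncomputable def achromatic {V : Type*} (G : SimpleGraph V) : ℕ :=
  sSup {r : ℕ | ∃ c : V → Fin r, IsCompletePartition G c ∧
    ∀ u v : V, c u = c v → ¬ G.Adj u v}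

/-- The polarity graph `Γ_{q²}^π` of an algebraically defined graph: vertices are
elements of `F^m` and distinct vertices `p`, `r` are adjacent iff for each `j` with
`1 ≤ j < m` (0-indexed; these are the equations `j = 2, …, m` of the paper) we have
`p_j + r_j^q = f_j(r₀^q, p₀, …, r_{j-1}^q, p_{j-1})`. -/
def algPolarityGraph (m q : ℕ) (F : Type*) [Field F]
    (f : (j : Fin m) → (Fin (j : ℕ) → F) → (Fin (j : ℕ) → F) → F) :
    SimpleGraph (Fin m → F) :=
  SimpleGraph.fromRel (fun p r =>
    ∀ j : Fin m, 0 < (j : ℕ) →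
      p j + (r j) ^ q = f j (fun i => (r (Fin.castLE j.isLt.le i)) ^ q)
        (fun i => p (Fin.castLE j.isLt.le i)))


noncomputable def buildAux {m q : ℕ} {F : Type*} [Field F]
    (f : (j : Fin m) → (Fin (j : ℕ) → F) → (Fin (j : ℕ) → F) → F)
    (sol : F → F × F) (B C : Fin m → F) : ℕ → F × F
  | 0 => if h : 0 < m then (B ⟨0, h⟩, C ⟨0, h⟩) else (0, 0)
  | (n + 1) =>
    if h : n + 1 < m then
      let j : Fin m := ⟨n + 1, h⟩
      let e := f j (fun i => (buildAux (q := q) f sol B C (i : ℕ)).2 ^ q)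
                   (fun i => (buildAux (q := q) f sol B C (i : ℕ)).1)
      (B j + (sol (e - B j - C j ^ q)).1, C j + (sol (e - B j - C j ^ q)).2)
    else (0, 0)
  termination_by n => n
  decreasing_by all_goals exact i.isLt

lemma buildAux_zero {m q : ℕ} {F : Type*} [Field F]
    (f : (j : Fin m) → (Fin (j : ℕ) → F) → (Fin (j : ℕ) → F) → F)
    (sol : F → F × F) (B C : Fin m → F) (h : 0 < m) :
    buildAux (q := q) f sol B C 0 = (B ⟨0, h⟩, C ⟨0, h⟩) := by
  rw [buildAux]; simp [h]

lemma buildAux_succ {m q : ℕ} {F : Type*} [Field F]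
    (f : (j : Fin m) → (Fin (j : ℕ) → F) → (Fin (j : ℕ) → F) → F)
    (sol : F → F × F) (B C : Fin m → F) (n : ℕ) (h : n + 1 < m) :
    buildAux (q := q) f sol B C (n + 1) =
      (B ⟨n + 1, h⟩ + (sol (f ⟨n + 1, h⟩ (fun i => (buildAux (q := q) f sol B C (i : ℕ)).2 ^ q)
          (fun i => (buildAux (q := q) f sol B C (i : ℕ)).1) - B ⟨n + 1, h⟩ - C ⟨n + 1, h⟩ ^ q)).1,
       C ⟨n + 1, h⟩ + (sol (f ⟨n + 1, h⟩ (fun i => (buildAux (q := q) f sol B C (i : ℕ)).2 ^ q)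
          (fun i => (buildAux (q := q) f sol B C (i : ℕ)).1) - B ⟨n + 1, h⟩ - C ⟨n + 1, h⟩ ^ q)).2) := by
  rw [buildAux]; simp [h]

lemma aux_root_bound {q : ℕ} {F : Type*} [Field F] (hq2 : 2 ≤ q)
    (a : F) (ha : a ≠ 0) (S : Set F) (hS : ∀ x ∈ S, x ^ q = a * x) : S.ncard ≤ q := by
  classical
  set P : Polynomial F := Polynomial.X ^ q - Polynomial.C a * Polynomial.X with hPdef
  have hP : P ≠ 0 := by
    intro h
    have h1 : P.coeff 1 = -a := by
      rw [hPdef, Polynomial.coeff_sub, Polynomial.coeff_X_pow, Polynomial.coeff_C_mul,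
        Polynomial.coeff_X_one, if_neg (by omega : ¬ 1 = q), mul_one, zero_sub]
    rw [h] at h1
    simp at h1
    exact ha h1
  have hdeg : P.natDegree ≤ q := by
    refine le_trans (Polynomial.natDegree_sub_le _ _) ?_
    have h1 : (Polynomial.C a * Polynomial.X).natDegree ≤ 1 := by
      refine le_trans (Polynomial.natDegree_mul_le) ?_
      simp
    simp only [Polynomial.natDegree_X_pow]
    omega
  have hsub : S ⊆ ↑P.roots.toFinset := by
    intro x hx
    simp only [Finset.coe_sort_coe, Multiset.mem_toFinset, Finset.mem_coe]
    rw [Polynomial.mem_roots hP]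
    simp [hPdef, Polynomial.IsRoot, sub_eq_zero, hS x hx]
  calc S.ncard ≤ (↑P.roots.toFinset : Set F).ncard :=
        Set.ncard_le_ncard hsub (Set.finite_coe_iff.mp (by infer_instance))
    _ = P.roots.toFinset.card := Set.ncard_coe_finset _
    _ ≤ Multiset.card P.roots := Multiset.toFinset_card_le _
    _ ≤ P.natDegree := P.card_roots'
    _ ≤ q := hdeg

lemma aux_delta {q : ℕ} {F : Type*} [Field F] [Fintype F] (hq2 : 2 ≤ q)
    (hF : Fintype.card F = q ^ 2) : ∃ δ : F, δ ^ q ≠ δ ∧ δ ^ q ≠ -δ := by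
  classical
  obtain ⟨g, hg⟩ := IsCyclic.exists_generator (α := Fˣ)
  have hord : orderOf g = q ^ 2 - 1 := by
    rw [orderOf_eq_card_of_forall_mem_zpowers hg, Nat.card_eq_fintype_card]
    rw [Fintype.card_units, hF]
  have hqsq : 2 * q ≤ q * q := by nlinarith
  refine ⟨(g : F), ?_, ?_⟩
  · intro h
    have hgu : g ^ q = g := Units.ext (by push_cast; exact h)
    have : g ^ (q - 1) = 1 := by
      have := mul_right_cancel (a := g ^ (q - 1)) (b := g) (c := 1)
      apply this
      rw [one_mul, ← pow_succ]
      have : q - 1 + 1 = q := by omega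
      rw [this, hgu]
    have hdvd : orderOf g ∣ q - 1 := orderOf_dvd_of_pow_eq_one this
    rw [hord] at hdvd
    have hle : q ^ 2 - 1 ≤ q - 1 := Nat.le_of_dvd (by omega) hdvd
    have : q ^ 2 = q * q := sq q
    omega
  · intro h
    have hgu : g ^ (2 * q) = g ^ 2 := Units.ext (by
      push_cast
      rw [mul_comm 2 q, pow_mul, h]
      ring)
    have : g ^ (2 * q - 2) = 1 := by
      have h2 : g ^ (2 * q - 2) * g ^ 2 = 1 * g ^ 2 := by
        rw [one_mul, ← pow_add]
        have : 2 * q - 2 + 2 = 2 * q := by omega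
        rw [this, hgu]
      exact mul_right_cancel h2
    have hdvd : orderOf g ∣ 2 * q - 2 := orderOf_dvd_of_pow_eq_one this
    rw [hord] at hdvd
    have hle : q ^ 2 - 1 ≤ 2 * q - 2 := Nat.le_of_dvd (by omega) hdvd
    have : q ^ 2 = q * q := sq q
    omega

set_option maxHeartbeats 2000000 in
theorem algPolarityGraph_optimally_complete
    (m : ℕ) (hm : 2 ≤ m) (hmeven : Even m) (q : ℕ) (hq : IsPrimePow q)
    (F : Type*) [Field F] [Fintype F] (hF : Fintype.card F = q ^ 2)
    (f : (j : Fin m) → (Fin (j : ℕ) → F) → (Fin (j : ℕ) → F) → F)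
    -- point-line-symmetry
    (hsym : ∀ (j : Fin m) (xs ys : Fin (j : ℕ) → F), f j xs ys = f j ys xs)
    -- equivariance with the q-power Frobenius
    (hfrob : ∀ (j : Fin m) (xs ys : Fin (j : ℕ) → F),
        f j (fun i => xs i ^ q) (fun i => ys i ^ q) = (f j xs ys) ^ q) :
    -- a partition into q^(m+1) independent sets with exactly one edge between
    -- any two distinct parts
    (∃ c : (Fin m → F) → Fin (q ^ (m + 1)),
        (∀ u v : Fin m → F, c u = c v → ¬ (algPolarityGraph m q F f).Adj u v) ∧
        (∀ i j : Fin (q ^ (m + 1)), i ≠ j →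
          ∃! ed : (Fin m → F) × (Fin m → F),
            c ed.1 = i ∧ c ed.2 = j ∧ (algPolarityGraph m q F f).Adj ed.1 ed.2)) ∧
    (algPolarityGraph m q F f).edgeSet.ncard = Nat.choose (q ^ (m + 1)) 2 ∧
    achromatic (algPolarityGraph m q F f) = q ^ (m + 1) := by
  classical
  have hq2 : 2 ≤ q := hq.two_le
  have hm0 : 0 < m := by omega
  obtain ⟨p, k, hp', hk, hpk⟩ := hq
  have hp : p.Prime := Nat.prime_iff.mpr hp'
  haveI : Fact p.Prime := ⟨hp⟩
  have hcard : Fintype.card F = p ^ (2 * k) := by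
    rw [hF, ← hpk, ← pow_mul, mul_comm]
  haveI hcharF : CharP F p := by
    have hprime : (ringChar F).Prime := CharP.char_is_prime F (ringChar F)
    have hzero : ((Fintype.card F : ℕ) : F) = 0 := FiniteField.cast_card_eq_zero F
    have hdvd : ringChar F ∣ p ^ (2 * k) := by
      rw [← hcard]
      exact (CharP.cast_eq_zero_iff F (ringChar F) _).mp hzero
    have heq : ringChar F = p :=
      (Nat.prime_dvd_prime_iff_eq hprime hp).mp (hprime.dvd_of_dvd_pow hdvd)
    have := ringChar.charP F
    rwa [heq] at this
  have hadd : ∀ x y : F, (x + y) ^ q = x ^ q + y ^ q := by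
    intro x y; rw [← hpk]; exact add_pow_char_pow x y p k
  have hsub : ∀ x y : F, (x - y) ^ q = x ^ q - y ^ q := by
    intro x y; rw [← hpk]; exact sub_pow_char_pow (x := x) (y := y) (p := p) k
  have hqq : ∀ x : F, (x ^ q) ^ q = x := by
    intro x
    rw [← pow_mul, (by rw [hF]; ring : q * q = Fintype.card F)]
    exact FiniteField.pow_card x
  obtain ⟨δ, hδ1, hδ2⟩ := aux_delta hq2 hF
  have hδ0 : δ ≠ 0 := by
    intro h
    apply hδ1
    rw [h, zero_pow (by omega : q ≠ 0)]
  -- the subfield-of-fixed-points as an additive subgroup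
  let sMap : F →+ F := AddMonoidHom.mk' (fun x => x ^ q - x) (by
    intro a b
    show (a + b) ^ q - (a + b) = (a ^ q - a) + (b ^ q - b)
    rw [hadd]; ring)
  let Kg : AddSubgroup F := sMap.ker
  have hKmem : ∀ x : F, x ∈ Kg ↔ x ^ q = x := by
    intro x
    rw [AddMonoidHom.mem_ker, AddMonoidHom.mk'_apply, sub_eq_zero]
  have hNF : Nat.card F = q ^ 2 := by rw [Nat.card_eq_fintype_card, hF]
  have hKle : Nat.card Kg ≤ q := by
    refine le_trans (le_of_eq (Nat.card_coe_set_eq (Kg : Set F))) ?_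
    exact aux_root_bound hq2 1 one_ne_zero _ (fun x hx => by rw [(hKmem x).mp hx, one_mul])
  have hZle : Nat.card sMap.range ≤ q := by
    refine le_trans (le_of_eq (Nat.card_coe_set_eq (sMap.range : Set F))) ?_
    refine aux_root_bound hq2 (-1) (by simp) _ ?_
    rintro y ⟨x, rfl⟩
    have : sMap x = x ^ q - x := rfl
    rw [this, hsub, hqq]
    ring
  have hcardFactor : Nat.card F = Nat.card (F ⧸ Kg) * Nat.card Kg :=
    AddSubgroup.card_eq_card_quotient_mul_card_addSubgroup Kg
  have hQle : Nat.card (F ⧸ Kg) ≤ q := by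
    rw [Nat.card_congr (QuotientAddGroup.quotientKerEquivRange sMap).toEquiv]
    exact hZle
  have hqq' : q * q = Nat.card (F ⧸ Kg) * Nat.card Kg := by
    rw [← hcardFactor, hNF]; ring
  have hKq : Nat.card Kg = q := by nlinarith [hKle, hQle, hqq']
  have hQq : Nat.card (F ⧸ Kg) = q := by nlinarith [hKle, hQle, hqq']
  -- independence of δ, δ^q over the subfield
  have hind : ∀ u v : F, u ^ q = u → v ^ q = v → u * δ + v * δ ^ q = 0 → u = 0 ∧ v = 0 := by
    intro u v hu hv h
    have h2 : u * δ ^ q + v * δ = 0 := by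
      have h' := congrArg (· ^ q) h
      rw [hadd, mul_pow, mul_pow, hu, hv, hqq, zero_pow (by omega : q ≠ 0)] at h'
      linear_combination h'
    have huv : u = v := by
      by_contra hne
      have hz : (u - v) * (δ - δ ^ q) = 0 := by ring_nf; linear_combination h - h2
      rcases mul_eq_zero.mp hz with h' | h'
      · exact hne (sub_eq_zero.mp h')
      · exact hδ1 (sub_eq_zero.mp h').symm
    subst huv
    have : u * (δ + δ ^ q) = 0 := by linear_combination h
    rcases mul_eq_zero.mp this with h' | h'
    · exact ⟨h', h'⟩
    · exact absurd (by linear_combination h' : δ ^ q = -δ) hδ2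
  -- surjectivity of (u,v) ↦ u δ + v δ^q over the subfield
  have hsurj : ∀ e : F, ∃ u v : F, u ^ q = u ∧ v ^ q = v ∧ u * δ + v * δ ^ q = e := by
    haveI : Fintype Kg := Fintype.ofFinite _
    let g : Kg × Kg → F := fun z => z.1.1 * δ + z.2.1 * δ ^ q
    have hginj : Function.Injective g := by
      rintro ⟨⟨u, hu⟩, ⟨v, hv⟩⟩ ⟨⟨u', hu'⟩, ⟨v', hv'⟩⟩ hg
      have hz : (u - u') * δ + (v - v') * δ ^ q = 0 := by
        simp only [g] at hg
        linear_combination hg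
      have h1 : (u - u') ^ q = u - u' := by
        rw [hsub, (hKmem u).mp hu, (hKmem u').mp hu']
      have h2 : (v - v') ^ q = v - v' := by
        rw [hsub, (hKmem v).mp hv, (hKmem v').mp hv']
      obtain ⟨e1, e2⟩ := hind _ _ h1 h2 hz
      have e3 : u = u' := by linear_combination e1
      have e4 : v = v' := by linear_combination e2
      exact Prod.ext (Subtype.ext e3) (Subtype.ext e4)
    have hcards : Fintype.card (Kg × Kg) = Fintype.card F := by
      rw [Fintype.card_prod, ← Nat.card_eq_fintype_card (α := Kg), hKq, hF]
      ring
    have hbij := (Fintype.bijective_iff_injective_and_card g).mpr ⟨hginj, hcards⟩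
    intro e
    obtain ⟨⟨⟨u, hu⟩, ⟨v, hv⟩⟩, he⟩ := hbij.2 e
    exact ⟨u, v, (hKmem u).mp hu, (hKmem v).mp hv, he⟩
  choose solu solv hsol1 hsol2 hsol3 using hsurj
  -- sol e = (x, y) with x, y ∈ Kδ and x + y^q = e
  let sol : F → F × F := fun e => (solu e * δ, solv e * δ)
  have hsolA : ∀ e, (sol e).1 + ((sol e).2) ^ q = e := by
    intro e
    show solu e * δ + (solv e * δ) ^ q = e
    rw [mul_pow, hsol2 e]
    exact hsol3 e
  have hsolB : ∀ e, ∃ w : F, w ^ q = w ∧ (sol e).1 = w * δ := fun e => ⟨solu e, hsol1 e, rfl⟩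
  have hsolC : ∀ e, ∃ w : F, w ^ q = w ∧ (sol e).2 = w * δ := fun e => ⟨solv e, hsol2 e, rfl⟩
  -- the defining relation and adjacency
  set Rel : (Fin m → F) → (Fin m → F) → Prop := fun pv rv =>
    ∀ j : Fin m, 0 < (j : ℕ) →
      pv j + (rv j) ^ q = f j (fun i => (rv (Fin.castLE j.isLt.le i)) ^ q)
        (fun i => pv (Fin.castLE j.isLt.le i)) with hReldef
  have hAdj : ∀ pv rv, (algPolarityGraph m q F f).Adj pv rv ↔ pv ≠ rv ∧ (Rel pv rv ∨ Rel rv pv) :=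
    fun pv rv => SimpleGraph.fromRel_adj _ pv rv
  have hRelSymm : ∀ pv rv, Rel pv rv → Rel rv pv := by
    intro pv rv h j hj
    have h1 := h j hj
    have e1 : (fun i => ((rv (Fin.castLE j.isLt.le i)) ^ q) ^ q)
        = (fun i : Fin (j : ℕ) => rv (Fin.castLE j.isLt.le i)) := funext fun i => hqq _
    have h3 : f j (fun i => (pv (Fin.castLE j.isLt.le i)) ^ q)
          (fun i => rv (Fin.castLE j.isLt.le i))
        = (f j (fun i => (rv (Fin.castLE j.isLt.le i)) ^ q)
          (fun i => pv (Fin.castLE j.isLt.le i))) ^ q := by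
      rw [hsym, ← e1]
      exact hfrob j _ _
    show rv j + (pv j) ^ q = _
    rw [h3, ← h1, hadd, hqq]
    ring
  -- the coloring
  haveI : Fintype (F ⧸ Kg) := Fintype.ofFinite _
  let idx : Fin (m - 1) → Fin m := fun i => ⟨(i : ℕ) + 1, by omega⟩
  let z : Fin m := ⟨0, hm0⟩
  let c0 : (Fin m → F) → F × (Fin (m - 1) → F ⧸ Kg) := fun pv =>
    (pv z, fun i => QuotientAddGroup.mk (s := Kg) (pv (idx i) / δ))
  have hcards2 : Fintype.card (F × (Fin (m - 1) → F ⧸ Kg)) = q ^ (m + 1) := by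
    rw [Fintype.card_prod, Fintype.card_fun, Fintype.card_fin,
      ← Nat.card_eq_fintype_card (α := F ⧸ Kg), hQq, hF, ← pow_add]
    congr 1
    omega
  let ecol : (F × (Fin (m - 1) → F ⧸ Kg)) ≃ Fin (q ^ (m + 1)) := Fintype.equivFinOfCardEq hcards2
  let c : (Fin m → F) → Fin (q ^ (m + 1)) := fun pv => ecol (c0 pv)
  -- characterization of equal colors
  have hceq : ∀ pv rv, c pv = c rv ↔ (pv z = rv z ∧ ∀ j : Fin m, 0 < (j : ℕ) →
      ∃ w : F, w ^ q = w ∧ pv j - rv j = w * δ) := by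
    intro pv rv
    constructor
    · intro h
      have h0 : c0 pv = c0 rv := ecol.injective h
      refine ⟨congrArg Prod.fst h0, ?_⟩
      intro j hj
      have hidx : idx ⟨(j : ℕ) - 1, by omega⟩ = j := by
        apply Fin.ext
        show (j : ℕ) - 1 + 1 = (j : ℕ)
        omega
      have h2 := congrFun (congrArg Prod.snd h0) ⟨(j : ℕ) - 1, by omega⟩
      simp only [c0] at h2
      rw [hidx] at h2
      have h3 : pv j / δ - rv j / δ ∈ Kg := (QuotientAddGroup.eq_iff_sub_mem).mp h2
      refine ⟨pv j / δ - rv j / δ, (hKmem _).mp h3, ?_⟩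
      field_simp
    · rintro ⟨h1, h2⟩
      show ecol _ = ecol _
      apply congrArg
      refine Prod.ext h1 (funext fun i => ?_)
      obtain ⟨w, hw, hd⟩ := h2 (idx i) (by simp [idx])
      show QuotientAddGroup.mk (pv (idx i) / δ) = QuotientAddGroup.mk (rv (idx i) / δ)
      rw [QuotientAddGroup.eq_iff_sub_mem, hKmem]
      have hwd : pv (idx i) / δ - rv (idx i) / δ = w := by
        rw [div_sub_div_same, hd]
        field_simp
      rw [hwd]
      exact hw
  -- the coloring is proper
  have hproper : ∀ u v : Fin m → F, c u = c v → ¬ (algPolarityGraph m q F f).Adj u v := by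
    intro u v hcuv hadj
    rw [hAdj] at hadj
    obtain ⟨hne, hor⟩ := hadj
    have hrel1 : Rel u v := hor.elim id (fun h => hRelSymm v u h)
    have hrel2 : Rel v u := hRelSymm u v hrel1
    obtain ⟨h0, hmod⟩ := (hceq u v).mp hcuv
    have hall : ∀ n : ℕ, ∀ j : Fin m, (j : ℕ) ≤ n → u j = v j := by
      intro n
      induction n with
      | zero =>
        intro j hj
        have hz : j = z := by
          apply Fin.ext
          show (j : ℕ) = 0
          omega
        rw [hz]; exact h0
      | succ n ih =>
        intro j hj
        by_cases hj0 : (j : ℕ) ≤ n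
        · exact ih j hj0
        have hjpos : 0 < (j : ℕ) := by omega
        have e1 := hrel1 j hjpos
        have e2 := hrel2 j hjpos
        have hargs1 : (fun i => (v (Fin.castLE j.isLt.le i)) ^ q)
            = (fun i : Fin (j : ℕ) => (u (Fin.castLE j.isLt.le i)) ^ q) := by
          funext i
          rw [ih (Fin.castLE j.isLt.le i) (by
            have hi := i.isLt
            simp only [Fin.coe_castLE]
            omega)]
        have hargs2 : (fun i => v (Fin.castLE j.isLt.le i))
            = (fun i : Fin (j : ℕ) => u (Fin.castLE j.isLt.le i)) := by
          funext i
          rw [ih (Fin.castLE j.isLt.le i) (by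
            have hi := i.isLt
            simp only [Fin.coe_castLE]
            omega)]
        rw [hargs1] at e1
        rw [hargs2] at e2
        have hd : (u j - v j) ^ q = u j - v j := by
          rw [hsub]
          linear_combination e2 - e1
        obtain ⟨w, hw, hwd⟩ := hmod j hjpos
        have hw0 : w * (δ ^ q - δ) = 0 := by
          have h5 : (w * δ) ^ q = w * δ := by rw [← hwd]; exact hd
          rw [mul_pow, hw] at h5
          linear_combination h5
        rcases mul_eq_zero.mp hw0 with h' | h'
        · have : u j - v j = 0 := by rw [hwd, h', zero_mul]
          linear_combination this
        · exact absurd (by linear_combination h' : δ ^ q = δ) hδ1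
    exact hne (funext fun j => hall m j (by have := j.isLt; omega))
  -- representatives in the quotient
  have hrepex : ∀ β : F ⧸ Kg, ∃ x : F, QuotientAddGroup.mk (s := Kg) x = β :=
    fun β => Quotient.exists_rep β
  choose rep hrep using hrepex
  -- unique edge between two distinct color classes
  have hpairs : ∀ i j : Fin (q ^ (m + 1)), i ≠ j →
      ∃! ed : (Fin m → F) × (Fin m → F),
        c ed.1 = i ∧ c ed.2 = j ∧ (algPolarityGraph m q F f).Adj ed.1 ed.2 := by
    intro ci cj hcij
    set Bc := ecol.symm ci with hBc
    set Cc := ecol.symm cj with hCc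
    set Bfun : Fin m → F := fun kk =>
      if hkk : (kk : ℕ) = 0 then Bc.1 else rep (Bc.2 ⟨(kk : ℕ) - 1, by omega⟩) * δ with hBfun
    set Cfun : Fin m → F := fun kk =>
      if hkk : (kk : ℕ) = 0 then Cc.1 else rep (Cc.2 ⟨(kk : ℕ) - 1, by omega⟩) * δ with hCfun
    set pp : Fin m → F := fun kk => (buildAux (q := q) f sol Bfun Cfun (kk : ℕ)).1 with hppdef
    set rr : Fin m → F := fun kk => (buildAux (q := q) f sol Bfun Cfun (kk : ℕ)).2 with hrrdef
    have hbuild : ∀ j : Fin m, 0 < (j : ℕ) →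
        (∃ w : F, w ^ q = w ∧ pp j - Bfun j = w * δ) ∧
        (∃ w : F, w ^ q = w ∧ rr j - Cfun j = w * δ) ∧
        (pp j + (rr j) ^ q = f j (fun i => (rr (Fin.castLE j.isLt.le i)) ^ q)
          (fun i => pp (Fin.castLE j.isLt.le i))) := by
      rintro ⟨jv, hlt⟩ hjpos
      rcases jv with _ | n
      · exact absurd hjpos (by simp)
      have harg1 : (fun i : Fin ((⟨n + 1, hlt⟩ : Fin m) : ℕ) =>
            (buildAux (q := q) f sol Bfun Cfun (i : ℕ)).2 ^ q)
          = (fun i => (rr (Fin.castLE (Fin.isLt ⟨n + 1, hlt⟩).le i)) ^ q) := by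
        funext i
        simp only [hrrdef, Fin.coe_castLE]
      have harg2 : (fun i : Fin ((⟨n + 1, hlt⟩ : Fin m) : ℕ) =>
            (buildAux (q := q) f sol Bfun Cfun (i : ℕ)).1)
          = (fun i => pp (Fin.castLE (Fin.isLt ⟨n + 1, hlt⟩).le i)) := by
        funext i
        simp only [hppdef, Fin.coe_castLE]
      have heq := buildAux_succ (q := q) f sol Bfun Cfun n hlt
      rw [harg1, harg2] at heq
      have hppj : pp ⟨n + 1, hlt⟩ = (buildAux (q := q) f sol Bfun Cfun (n + 1)).1 := by
        rw [hppdef]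
      have hrrj : rr ⟨n + 1, hlt⟩ = (buildAux (q := q) f sol Bfun Cfun (n + 1)).2 := by
        rw [hrrdef]
      set E : F := f ⟨n + 1, hlt⟩
          (fun i => (rr (Fin.castLE (Fin.isLt ⟨n + 1, hlt⟩).le i)) ^ q)
          (fun i => pp (Fin.castLE (Fin.isLt ⟨n + 1, hlt⟩).le i))
          - Bfun ⟨n + 1, hlt⟩ - Cfun ⟨n + 1, hlt⟩ ^ q with hEdef
      have hE1 : pp ⟨n + 1, hlt⟩ = Bfun ⟨n + 1, hlt⟩ + (sol E).1 := by
        rw [hppj, heq]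
      have hE2 : rr ⟨n + 1, hlt⟩ = Cfun ⟨n + 1, hlt⟩ + (sol E).2 := by
        rw [hrrj, heq]
      refine ⟨⟨solu E, hsol1 E, ?_⟩, ⟨solv E, hsol2 E, ?_⟩, ?_⟩
      · rw [hE1]; show Bfun _ + solu E * δ - Bfun _ = solu E * δ; ring
      · rw [hE2]; show Cfun _ + solv E * δ - Cfun _ = solv E * δ; ring
      · rw [hE1, hE2, hadd]
        have h6 := hsolA E
        linear_combination h6 + hEdef
    have hRelpp : Rel pp rr := fun j hj => (hbuild j hj).2.2
    have hcol : ∀ (xx : Fin m → F) (Xc : F × (Fin (m - 1) → F ⧸ Kg)) (Xfun : Fin m → F),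
        (Xfun = fun kk : Fin m =>
          if hkk : (kk : ℕ) = 0 then Xc.1 else rep (Xc.2 ⟨(kk : ℕ) - 1, by omega⟩) * δ) →
        xx z = Xc.1 →
        (∀ j : Fin m, 0 < (j : ℕ) → ∃ w : F, w ^ q = w ∧ xx j - Xfun j = w * δ) →
        c xx = ecol Xc := by
      intro xx Xc Xfun hXfun hz hmod
      show ecol (c0 xx) = ecol Xc
      apply congrArg
      refine Prod.ext ?_ (funext fun i' => ?_)
      · exact hz
      · obtain ⟨w, hw, hd⟩ := hmod (idx i') (by simp [idx])
        show QuotientAddGroup.mk (xx (idx i') / δ) = Xc.2 i'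
        have hBidx : Xfun (idx i') = rep (Xc.2 i') * δ := by
          rw [hXfun]
          have h7 : ((idx i' : Fin m) : ℕ) = (i' : ℕ) + 1 := rfl
          simp only [h7]
          rw [dif_neg (by omega)]
          have h8 : (i' : ℕ) + 1 - 1 = (i' : ℕ) := by omega
          simp only [h8, Fin.eta]
        have hxx : xx (idx i') = rep (Xc.2 i') * δ + w * δ := by
          have := hd
          rw [hBidx] at this
          linear_combination this
        rw [← hrep (Xc.2 i')]
        rw [QuotientAddGroup.eq_iff_sub_mem, hKmem]
        have hdiv : xx (idx i') / δ - rep (Xc.2 i') = w := by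
          rw [hxx]
          field_simp
          ring
        rw [hdiv]
        exact hw
    have hcpp : c pp = ci := by
      have := hcol pp Bc Bfun hBfun ?_ ?_
      · rw [this, hBc, Equiv.apply_symm_apply]
      · show (buildAux (q := q) f sol Bfun Cfun 0).1 = Bc.1
        rw [buildAux_zero f sol Bfun Cfun hm0]
        show Bfun ⟨0, hm0⟩ = Bc.1
        simp [hBfun]
      · exact fun j hj => (hbuild j hj).1
    have hcrr : c rr = cj := by
      have := hcol rr Cc Cfun hCfun ?_ ?_
      · rw [this, hCc, Equiv.apply_symm_apply]
      · show (buildAux (q := q) f sol Bfun Cfun 0).2 = Cc.1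
        rw [buildAux_zero f sol Bfun Cfun hm0]
        show Cfun ⟨0, hm0⟩ = Cc.1
        simp [hCfun]
      · exact fun j hj => (hbuild j hj).2.1
    have hppne : pp ≠ rr := by
      intro h
      apply hcij
      rw [← hcpp, ← hcrr, h]
    have hadjpr : (algPolarityGraph m q F f).Adj pp rr :=
      (hAdj pp rr).mpr ⟨hppne, Or.inl hRelpp⟩
    -- uniqueness
    have huniq : ∀ p1 r1 p2 r2 : Fin m → F, c p1 = ci → c r1 = cj → Rel p1 r1 →
        c p2 = ci → c r2 = cj → Rel p2 r2 → p1 = p2 ∧ r1 = r2 := by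
      intro p1 r1 p2 r2 hc1 hc2 hr1 hc3 hc4 hr2
      obtain ⟨hz1, hmod1⟩ := (hceq p1 p2).mp (by rw [hc1, hc3])
      obtain ⟨hz2, hmod2⟩ := (hceq r1 r2).mp (by rw [hc2, hc4])
      have hall : ∀ n : ℕ, ∀ kk : Fin m, (kk : ℕ) ≤ n → p1 kk = p2 kk ∧ r1 kk = r2 kk := by
        intro n
        induction n with
        | zero =>
          intro kk hkk
          have hz : kk = z := by
            apply Fin.ext
            show (kk : ℕ) = 0
            omega
          rw [hz]; exact ⟨hz1, hz2⟩
        | succ n ih =>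
          intro kk hkk
          by_cases hk0 : (kk : ℕ) ≤ n
          · exact ih kk hk0
          have hkpos : 0 < (kk : ℕ) := by omega
          have e1 := hr1 kk hkpos
          have e2 := hr2 kk hkpos
          have hargs1 : (fun i => (r1 (Fin.castLE kk.isLt.le i)) ^ q)
              = (fun i : Fin (kk : ℕ) => (r2 (Fin.castLE kk.isLt.le i)) ^ q) := by
            funext i
            rw [(ih (Fin.castLE kk.isLt.le i) (by
              have hi := i.isLt
              simp only [Fin.coe_castLE]
              omega)).2]
          have hargs2 : (fun i => p1 (Fin.castLE kk.isLt.le i))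
              = (fun i : Fin (kk : ℕ) => p2 (Fin.castLE kk.isLt.le i)) := by
            funext i
            rw [(ih (Fin.castLE kk.isLt.le i) (by
              have hi := i.isLt
              simp only [Fin.coe_castLE]
              omega)).1]
          rw [hargs1, hargs2] at e1
          have e3 : p1 kk + r1 kk ^ q = p2 kk + r2 kk ^ q := e1.trans e2.symm
          obtain ⟨w, hw, hwd⟩ := hmod1 kk hkpos
          obtain ⟨w', hw', hwd'⟩ := hmod2 kk hkpos
          have hz0 : w * δ + w' * δ ^ q = 0 := by
            have h8 : (r1 kk - r2 kk) ^ q = (w' * δ) ^ q := by rw [hwd']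
            rw [hsub, mul_pow, hw'] at h8
            linear_combination e3 - hwd - h8
          obtain ⟨hw0, hw'0⟩ := hind w w' hw hw' hz0
          constructor
          · have : p1 kk - p2 kk = 0 := by rw [hwd, hw0, zero_mul]
            linear_combination this
          · have : r1 kk - r2 kk = 0 := by rw [hwd', hw'0, zero_mul]
            linear_combination this
      constructor
      · exact funext fun kk => (hall m kk (by have := kk.isLt; omega)).1
      · exact funext fun kk => (hall m kk (by have := kk.isLt; omega)).2
    refine ⟨(pp, rr), ⟨hcpp, hcrr, hadjpr⟩, ?_⟩
    rintro ⟨p2, r2⟩ ⟨hc1, hc2, hadj2⟩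
    obtain ⟨hne2, hor2⟩ := (hAdj p2 r2).mp hadj2
    have hrel2 : Rel p2 r2 := hor2.elim id (fun h => hRelSymm r2 p2 h)
    obtain ⟨h1, h2⟩ := huniq p2 r2 pp rr hc1 hc2 hrel2 hcpp hcrr hRelpp
    exact Prod.ext h1 h2
  -- assemble
  have hcompl : IsCompletePartition (algPolarityGraph m q F f) c := by
    intro i j hij
    obtain ⟨ed, ⟨h1, h2, h3⟩, -⟩ := hpairs i j hij
    exact ⟨ed.1, ed.2, h1, h2, h3⟩
  have hR2 : 2 ≤ q ^ (m + 1) := le_trans hq2 (Nat.le_self_pow (by omega) q)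
  -- the key uniqueness on unordered pairs
  have key : ∀ u v u' v' : Fin m → F, (algPolarityGraph m q F f).Adj u v →
      (algPolarityGraph m q F f).Adj u' v' → s(c u, c v) = s(c u', c v') →
      s(u, v) = s(u', v') := by
    intro u v u' v' ha ha' hmap
    have hcuv : c u ≠ c v := fun hc => hproper u v hc ha
    rcases Sym2.eq_iff.mp hmap with ⟨h1, h2⟩ | ⟨h1, h2⟩
    · obtain ⟨ed, hed, hu⟩ := hpairs (c u) (c v) hcuv
      have e1 := hu (u, v) ⟨rfl, rfl, ha⟩
      have e2 := hu (u', v') ⟨h1.symm, h2.symm, ha'⟩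
      have h3 : (u, v) = (u', v') := e1.trans e2.symm
      rw [Prod.mk.injEq] at h3
      rw [h3.1, h3.2]
    · obtain ⟨ed, hed, hu⟩ := hpairs (c u) (c v) hcuv
      have e1 := hu (u, v) ⟨rfl, rfl, ha⟩
      have e2 := hu (v', u') ⟨h1.symm, h2.symm, ha'.symm⟩
      have h3 : (u, v) = (v', u') := e1.trans e2.symm
      rw [Prod.mk.injEq] at h3
      rw [h3.1, h3.2, Sym2.eq_swap]
  have hdiag : ∀ e ∈ (algPolarityGraph m q F f).edgeSet, ¬ (Sym2.map c e).IsDiag := by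
    intro e
    induction e using Sym2.ind with
    | _ u v =>
      intro he
      rw [Sym2.map_pair_eq, Sym2.mk_isDiag_iff]
      intro hcv
      exact hproper u v hcv ((algPolarityGraph m q F f).mem_edgeSet.mp he)
  let Φ : (algPolarityGraph m q F f).edgeSet → {x : Sym2 (Fin (q ^ (m + 1))) // ¬ x.IsDiag} :=
    fun e => ⟨Sym2.map c e.1, hdiag e.1 e.2⟩
  have hinj2 : ∀ e1 e2 : Sym2 (Fin m → F), e1 ∈ (algPolarityGraph m q F f).edgeSet →
      e2 ∈ (algPolarityGraph m q F f).edgeSet → Sym2.map c e1 = Sym2.map c e2 → e1 = e2 := by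
    intro e1 e2
    induction e1 using Sym2.ind with
    | _ u v =>
      induction e2 using Sym2.ind with
      | _ u' v' =>
        intro h1 h2 hmp
        simp only [Sym2.map_pair_eq] at hmp
        exact key u v u' v' ((algPolarityGraph m q F f).mem_edgeSet.mp h1) ((algPolarityGraph m q F f).mem_edgeSet.mp h2) hmp
  have hΦbij : Function.Bijective Φ := by
    constructor
    · rintro ⟨e1, he1⟩ ⟨e2, he2⟩ h12
      exact Subtype.ext (hinj2 e1 e2 he1 he2 (congrArg Subtype.val h12))
    · rintro ⟨x, hx⟩
      induction x using Sym2.ind with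
      | _ i j =>
        have hij : i ≠ j := by rwa [Sym2.mk_isDiag_iff] at hx
        obtain ⟨ed, ⟨hc1, hc2, hadj⟩, -⟩ := hpairs i j hij
        refine ⟨⟨s(ed.1, ed.2), (algPolarityGraph m q F f).mem_edgeSet.mpr hadj⟩, Subtype.ext ?_⟩
        show Sym2.map c s(ed.1, ed.2) = s(i, j)
        rw [Sym2.map_pair_eq, hc1, hc2]
  have hcnt : (algPolarityGraph m q F f).edgeSet.ncard = Nat.choose (q ^ (m + 1)) 2 := by
    rw [← Nat.card_coe_set_eq, Nat.card_congr (Equiv.ofBijective Φ hΦbij),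
      Nat.card_eq_fintype_card, Sym2.card_subtype_not_diag, Fintype.card_fin]
  refine ⟨⟨c, hproper, hpairs⟩, hcnt, ?_⟩
  -- the achromatic number
  have hub : ∀ r' ∈ {r' : ℕ | ∃ c' : (Fin m → F) → Fin r',
      IsCompletePartition (algPolarityGraph m q F f) c' ∧
      ∀ u v : Fin m → F, c' u = c' v → ¬ (algPolarityGraph m q F f).Adj u v},
      r' ≤ q ^ (m + 1) := by
    rintro r' ⟨c', hcomp, hprop⟩
    have hex : ∀ x : Sym2 (Fin r'), ¬ x.IsDiag →
        ∃ e, e ∈ (algPolarityGraph m q F f).edgeSet ∧ Sym2.map c' e = x := by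
      intro x
      induction x using Sym2.ind with
      | _ i j =>
        intro hx
        have hij : i ≠ j := by rwa [Sym2.mk_isDiag_iff] at hx
        obtain ⟨u, v, h1, h2, h3⟩ := hcomp i j hij
        exact ⟨s(u, v), (algPolarityGraph m q F f).mem_edgeSet.mpr h3, by rw [Sym2.map_pair_eq, h1, h2]⟩
    choose eF h1 h2 using hex
    let Ψ : {x : Sym2 (Fin r') // ¬ x.IsDiag} → (algPolarityGraph m q F f).edgeSet :=
      fun x => ⟨eF x.1 x.2, h1 x.1 x.2⟩
    have hΨinj : Function.Injective Ψ := by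
      rintro x y hxy
      apply Subtype.ext
      rw [← h2 x.1 x.2, ← h2 y.1 y.2]
      exact congrArg (Sym2.map c') (congrArg Subtype.val hxy)
    have hle := Nat.card_le_card_of_injective Ψ hΨinj
    rw [Nat.card_eq_fintype_card, Sym2.card_subtype_not_diag, Fintype.card_fin,
      Nat.card_coe_set_eq, hcnt] at hle
    by_contra hgt
    push_neg at hgt
    have h3 : (q ^ (m + 1) + 1).choose 2 ≤ r'.choose 2 := Nat.choose_le_choose 2 (by omega)
    have h4 : (q ^ (m + 1) + 1).choose 2 = (q ^ (m + 1)).choose 1 + (q ^ (m + 1)).choose 2 :=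
      Nat.choose_succ_succ _ 1
    rw [Nat.choose_one_right] at h4
    omega
  have hrmem : q ^ (m + 1) ∈ {r' : ℕ | ∃ c' : (Fin m → F) → Fin r',
      IsCompletePartition (algPolarityGraph m q F f) c' ∧
      ∀ u v : Fin m → F, c' u = c' v → ¬ (algPolarityGraph m q F f).Adj u v} :=
    ⟨c, hcompl, hproper⟩
  unfold achromatic
  exact le_antisymm (csSup_le ⟨_, hrmem⟩ hub) (le_csSup ⟨q ^ (m + 1), fun x hx => hub x hx⟩ hrmem)
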